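/- Let w : ℤ² → ℝ be any function (deterministic site weights), let N ≥ 1, and for a finite nonempty B ⊆ ℤ² write w(B) = Σ_{i∈B} w(i). Then for every finite nonempty connected subset A of Λ_N, one has w(A)/|∂A| ≤ max over all nonempty simply connected subsets B of Λ_N of |w(B)|/|∂B|. Consequently, the maximum of w(A)/|∂A| over all nonempty connected subsets A of Λ_N containing the origin is at most the maximum of |w(B)|/|∂B| over all nonempty simply connected subsets B of Λ_N. -/

import Mathlib

open MeasureTheory ProbabilityTheory

/-- Nearest-neighbor adjacency on the square lattice `ℤ²`. -/
def adjZ2 (u v : ℤ × ℤ) : Prop :=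
  (u.1 - v.1).natAbs + (u.2 - v.2).natAbs = 1

instance : DecidableRel adjZ2 := fun u v => by unfold adjZ2; infer_instance

/-- The square lattice `ℤ²` as a simple graph. -/
def latticeGraph : SimpleGraph (ℤ × ℤ) where
  Adj := adjZ2
  symm := by
    constructor
    intro u v h
    unfold adjZ2 at *
    omega
  loopless := by constructor; intro v h; simp [adjZ2] at h

/-- A set of vertices is connected if the induced subgraph is connected. -/
def connSub (A : Set (ℤ × ℤ)) : Prop := (latticeGraph.induce A).Connected

/-- A finite nonempty set is simply connected if it is connected and its
complement is connected. -/
def simplyConn (A : Set (ℤ × ℤ)) : Prop :=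
  A.Nonempty ∧ A.Finite ∧ connSub A ∧ connSub Aᶜ

/-- The edge boundary of `A`: nearest-neighbor edges with exactly one endpoint in `A`. -/
def edgeBoundary (A : Set (ℤ × ℤ)) : Set (Sym2 (ℤ × ℤ)) :=
  {e | ∃ u v, e = s(u, v) ∧ adjZ2 u v ∧ u ∈ A ∧ v ∉ A}

/-- `|∂A|`, the number of boundary edges of `A`. -/
noncomputable def bdCard (A : Set (ℤ × ℤ)) : ℕ := (edgeBoundary A).ncard

/-- The box `Λ_N = {v : |v|_∞ ≤ N}`. -/
def latticeBox (N : ℕ) : Set (ℤ × ℤ) := {v | |v.1| ≤ (N : ℤ) ∧ |v.2| ≤ (N : ℤ)}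

/-- The collection `𝒜_N` of lattice animals: nonempty simply connected subsets of
`Λ_N` containing the origin. -/
def animals (N : ℕ) : Set (Set (ℤ × ℤ)) :=
  {A | A ⊆ latticeBox N ∧ (0, 0) ∈ A ∧ simplyConn A}

/-- Total field weight `Σ_{i ∈ A} Σ_{α=0}^{q-1} h_i^α` of a set `A`. -/
noncomputable def fieldWeight (q : ℕ) (h : (ℤ × ℤ) × Fin q → ℝ) (A : Set (ℤ × ℤ)) : ℝ :=
  ∑ᶠ i ∈ A, ∑ α : Fin q, h (i, α)

/-- The greedy lattice animal `G_N` for field realization `h`. -/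
noncomputable def gla (q N : ℕ) (h : (ℤ × ℤ) × Fin q → ℝ) : ℝ :=
  sSup {r | ∃ A ∈ animals N, r = fieldWeight q h A / (bdCard A : ℝ)}

/-!
If the complement of a connected `A ⊆ Λ_N` is disconnected, one of its components `H` misses the
connected set `Λ_Nᶜ` and so lies in `Λ_N`. Such a hole is simply connected, `A ∪ H` is connected,
and since every neighbour of `H` outside `H` lies in `A`, `w(A) = w(A ∪ H) - w(H)` and
`|∂A| = |∂(A ∪ H)| + |∂H|`. Thus `w(A)/|∂A|` is a mediant of `w(A ∪ H)/|∂(A ∪ H)|` and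
`-w(H)/|∂H|`, and filling the holes one at a time (induction on `|Λ_N \ A|`) ends at a simply
connected set.
-/

namespace SimpleGraph

variable {V : Type*} {G : SimpleGraph V}

theorem induce_connected_of_forall_exists_connected {s : Set V} (u : V) (hu : u ∈ s)
    (h : ∀ v ∈ s, ∃ t ⊆ s, u ∈ t ∧ v ∈ t ∧ (G.induce t).Connected) :
    (G.induce s).Connected :=
  induce_connected_of_patches u hu fun hv ↦
    let ⟨t, hts, hut, hvt, ht⟩ := h _ hv
    ⟨t, hts, hut, hvt, ht.preconnected _ _⟩

namespace ComponentCompl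

variable {K : Set V}

theorem connected_induce (C : G.ComponentCompl K) : (G.induce (C : Set V)).Connected :=
  C.connected_toSimpleGraph.map
    { toFun := fun x ↦ ⟨x.1.1, x.1.2, x.2⟩, map_rel' := id }
    (by rintro ⟨v, hvK, hvC⟩; exact ⟨⟨⟨v, hvK⟩, hvC⟩, rfl⟩)

theorem connected_induce_union (hG : G.Preconnected) (hK : (G.induce K).Connected)
    (C : G.ComponentCompl K) : (G.induce (K ∪ C)).Connected := by
  obtain ⟨⟨c, k⟩, hc, hk, hadj⟩ :=
    C.exists_adj_boundary_pair hG (Set.nonempty_coe_sort.mp hK.nonempty)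
  exact SimpleGraph.connected_induce_union hK.preconnected C.connected_induce.preconnected
    hk hc hadj.symm

theorem connected_induce_compl (hG : G.Preconnected) (hK : (G.induce K).Connected)
    (C : G.ComponentCompl K) : (G.induce (C : Set V)ᶜ).Connected := by
  obtain ⟨⟨u, hu⟩⟩ := hK.nonempty
  have hKC : K ⊆ (C : Set V)ᶜ := Set.disjoint_left.mp C.disjoint_right
  refine induce_connected_of_forall_exists_connected u (hKC hu) fun v hv ↦ ?_
  by_cases hvK : v ∈ K
  · exact ⟨K, hKC, hu, hvK, hK⟩
  · let D := G.componentComplMk hvK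
    have hDC : Disjoint (D : Set V) C :=
      ComponentCompl.pairwise_disjoint fun h ↦ hv (h ▸ G.componentComplMk_mem hvK)
    exact ⟨K ∪ D, Set.union_subset hKC (Set.disjoint_left.mp hDC), Or.inl hu,
      Or.inr (G.componentComplMk_mem hvK), connected_induce_union hG hK D⟩

end ComponentCompl

theorem connected_induce_compl_or_exists_componentCompl_subset {K L : Set V} (hKL : K ⊆ L)
    (hL : (G.induce Lᶜ).Connected) :
    (G.induce Kᶜ).Connected ∨ ∃ C : G.ComponentCompl K, (C : Set V) ⊆ L := by
  obtain ⟨⟨z, hz⟩⟩ := hL.nonempty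
  set C₀ := G.componentComplMk (Set.notMem_subset hKL hz)
  have hLC₀ : Lᶜ ⊆ C₀ := fun y hy ↦
    ⟨Set.notMem_subset hKL hy, ConnectedComponent.sound <| (hL.preconnected ⟨y, hy⟩ ⟨z, hz⟩).map
      (induceHomOfLE G (Set.compl_subset_compl.mpr hKL)).toHom⟩
  by_cases h : ∃ C : G.ComponentCompl K, (C : Set V) ⊆ L
  · exact Or.inr h
  push Not at h
  left
  have hC₀ : (C₀ : Set V) = Kᶜ := by
    refine Set.Subset.antisymm (fun v hv ↦ ComponentCompl.notMem_of_mem hv) fun v hv ↦ ?_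
    obtain ⟨y, hyC, hyL⟩ := Set.not_subset.mp (h (G.componentComplMk hv))
    have hC : G.componentComplMk hv = C₀ :=
      ComponentCompl.pairwise_disjoint.eq (Set.not_disjoint_iff.mpr ⟨y, hyC, hLC₀ hyL⟩)
    exact hC ▸ G.componentComplMk_mem hv
  exact hC₀ ▸ C₀.connected_induce

end SimpleGraph

open SimpleGraph

theorem latticeGraph_eq_boxProd : latticeGraph = hasse ℤ □ hasse ℤ := by
  ext u v
  simp only [boxProd_adj, hasse_adj, Order.covBy_iff_add_one_eq]
  change adjZ2 u v ↔ _
  unfold adjZ2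
  omega

theorem latticeGraph_preconnected : latticeGraph.Preconnected := by
  rw [latticeGraph_eq_boxProd]
  exact .boxProd (hasse_preconnected_of_succ ℤ) (hasse_preconnected_of_succ ℤ)

theorem hasse_int_connected : (hasse ℤ).Connected :=
  ⟨hasse_preconnected_of_succ ℤ⟩

theorem connSub_row (y : ℤ) : connSub {v | v.2 = y} := by
  have hrange : {v : ℤ × ℤ | v.2 = y} = Set.range (boxProdLeft (hasse ℤ) (hasse ℤ) y) := by
    ext ⟨a, b⟩
    exact ⟨fun h ↦ ⟨a, by rw [← h]; rfl⟩, fun ⟨t, ht⟩ ↦ (congrArg Prod.snd ht).symm⟩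
  rw [connSub, latticeGraph_eq_boxProd, hrange, ← (Embedding.isoInduceRange _).connected_iff]
  exact hasse_int_connected

theorem connSub_col (x : ℤ) : connSub {v | v.1 = x} := by
  have hrange : {v : ℤ × ℤ | v.1 = x} = Set.range (boxProdRight (hasse ℤ) (hasse ℤ) x) := by
    ext ⟨a, b⟩
    exact ⟨fun h ↦ ⟨b, by rw [← h]; rfl⟩, fun ⟨t, ht⟩ ↦ (congrArg Prod.fst ht).symm⟩
  rw [connSub, latticeGraph_eq_boxProd, hrange, ← (Embedding.isoInduceRange _).connected_iff]
  exact hasse_int_connected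

theorem latticeBox_finite (N : ℕ) : (latticeBox N).Finite :=
  (Set.finite_Icc (-(N : ℤ), -(N : ℤ)) (N, N)).subset fun v hv ↦ by
    simp_all [latticeBox, abs_le, Prod.le_def]

theorem mem_compl_latticeBox {N : ℕ} {v : ℤ × ℤ} :
    v ∈ (latticeBox N)ᶜ ↔ N < |v.1| ∨ N < |v.2| := by
  simp only [latticeBox, Set.mem_compl_iff, Set.mem_ofPred_eq, not_and_or, not_le]

theorem connSub_compl_latticeBox (N : ℕ) : connSub (latticeBox N)ᶜ := by
  have hN : (N : ℤ) < |(N : ℤ) + 1| := by rw [lt_abs]; omega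
  refine induce_connected_of_forall_exists_connected ((N + 1 : ℤ), (N + 1 : ℤ))
    (mem_compl_latticeBox.mpr (Or.inl hN)) fun ⟨x, y⟩ hv ↦ ?_
  rcases mem_compl_latticeBox.mp hv with hx | hy
  · refine ⟨{v | v.1 = x} ∪ {v | v.2 = N + 1}, ?_, Or.inr rfl, Or.inl rfl,
      induce_union_connected (connSub_col x).preconnected (connSub_row _).preconnected
        ⟨(x, N + 1), rfl, rfl⟩⟩
    rintro ⟨a, b⟩ (rfl | rfl : a = x ∨ b = N + 1)
    exacts [mem_compl_latticeBox.mpr (.inl hx), mem_compl_latticeBox.mpr (.inr hN)]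
  · refine ⟨{v | v.2 = y} ∪ {v | v.1 = N + 1}, ?_, Or.inr rfl, Or.inl rfl,
      induce_union_connected (connSub_row y).preconnected (connSub_col _).preconnected
        ⟨(N + 1, y), rfl, rfl⟩⟩
    rintro ⟨a, b⟩ (rfl | rfl : b = y ∨ a = N + 1)
    exacts [mem_compl_latticeBox.mpr (.inr hy), mem_compl_latticeBox.mpr (.inl hN)]

theorem connSub_singleton (v : ℤ × ℤ) : connSub {v} := by
  rw [connSub, induce_singleton_eq_top]
  exact connected_top

theorem edgeBoundary_finite {B : Set (ℤ × ℤ)} (hB : B.Finite) : (edgeBoundary B).Finite := by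
  let D : Set (ℤ × ℤ) := {(1, 0), (-1, 0), (0, 1), (0, -1)}
  refine ((hB.prod (hB.add D.toFinite)).image fun p ↦ s(p.1, p.2)).subset ?_
  rintro _ ⟨u, v, rfl, huv, hu, -⟩
  refine ⟨(u, v), ⟨hu, u, hu, v - u, ?_, add_sub_cancel u v⟩, rfl⟩
  unfold adjZ2 at huv
  simp only [D, Set.mem_insert_iff, Set.mem_singleton_iff, Prod.ext_iff, Prod.fst_sub,
    Prod.snd_sub]
  omega

theorem edgeBoundary_nonempty {B : Set (ℤ × ℤ)} (hB : B.Finite) (hne : B.Nonempty) :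
    (edgeBoundary B).Nonempty := by
  obtain ⟨u, hu, hmax⟩ := Set.exists_max_image B Prod.fst hB hne
  exact ⟨_, u, (u.1 + 1, u.2), rfl, by simp [adjZ2], hu,
    fun h ↦ (hmax _ h).not_gt (lt_add_one u.1)⟩

theorem bdCard_pos {B : Set (ℤ × ℤ)} (hB : B.Finite) (hne : B.Nonempty) : 0 < bdCard B :=
  (Set.ncard_pos (edgeBoundary_finite hB)).mpr (edgeBoundary_nonempty hB hne)

section Hole

variable {A H : Set (ℤ × ℤ)}

theorem edgeBoundary_eq_union (hAH : Disjoint A H)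
    (hH : ∀ u ∈ H, ∀ v, adjZ2 u v → v ∉ A → v ∈ H) :
    edgeBoundary A = edgeBoundary (A ∪ H) ∪ edgeBoundary H := by
  ext e
  constructor
  · rintro ⟨u, v, rfl, huv, hu, hv⟩
    by_cases hvH : v ∈ H
    · exact Or.inr ⟨v, u, Sym2.eq_swap, latticeGraph.adj_symm huv, hvH, Set.disjoint_left.mp hAH hu⟩
    · exact Or.inl ⟨u, v, rfl, huv, Or.inl hu, fun h ↦ h.elim hv hvH⟩
  · rintro (⟨u, v, rfl, huv, hu | hu, hv⟩ | ⟨u, v, rfl, huv, hu, hv⟩)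
    · exact ⟨u, v, rfl, huv, hu, fun h ↦ hv (Or.inl h)⟩
    · exact absurd (hH u hu v huv fun h ↦ hv (Or.inl h)) fun h ↦ hv (Or.inr h)
    · exact ⟨v, u, Sym2.eq_swap, latticeGraph.adj_symm huv, by_contra fun h ↦ hv (hH u hu v huv h),
        Set.disjoint_right.mp hAH hu⟩

theorem disjoint_edgeBoundary_union (hH : ∀ u ∈ H, ∀ v, adjZ2 u v → v ∉ A → v ∈ H) :
    Disjoint (edgeBoundary (A ∪ H)) (edgeBoundary H) := by
  refine Set.disjoint_left.mpr ?_
  rintro _ ⟨u, v, rfl, -, hu, hv⟩ ⟨p, q, hpq, hadj, hp, hq⟩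
  rcases Sym2.eq_iff.mp hpq with ⟨rfl, rfl⟩ | ⟨rfl, rfl⟩
  · exact hv (Or.inl (by_contra fun h ↦ hq (hH _ hp _ hadj h)))
  · exact hv (Or.inr hp)

theorem bdCard_eq_add (hA : A.Finite) (hHfin : H.Finite) (hAH : Disjoint A H)
    (hH : ∀ u ∈ H, ∀ v, adjZ2 u v → v ∉ A → v ∈ H) :
    bdCard A = bdCard (A ∪ H) + bdCard H := by
  rw [bdCard, edgeBoundary_eq_union hAH hH, Set.ncard_union_eq (disjoint_edgeBoundary_union hH)
    (edgeBoundary_finite (hA.union hHfin)) (edgeBoundary_finite hHfin)]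
  rfl

theorem add_div_add_le {a b c d M : ℝ} (hb : 0 < b) (hd : 0 < d) (h₁ : a / b ≤ M)
    (h₂ : c / d ≤ M) : (a + c) / (b + d) ≤ M := by
  rw [div_le_iff₀ hb] at h₁
  rw [div_le_iff₀ hd] at h₂
  rw [div_le_iff₀ (add_pos hb hd)]
  linarith

theorem finsum_div_bdCard_le_of_hole (w : ℤ × ℤ → ℝ) {M : ℝ} (hA : A.Finite)
    (hAne : A.Nonempty) (hHfin : H.Finite) (hHne : H.Nonempty) (hAH : Disjoint A H)
    (hH : ∀ u ∈ H, ∀ v, adjZ2 u v → v ∉ A → v ∈ H)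
    (h₁ : (∑ᶠ i ∈ A ∪ H, w i) / bdCard (A ∪ H) ≤ M) (h₂ : |∑ᶠ i ∈ H, w i| / bdCard H ≤ M) :
    (∑ᶠ i ∈ A, w i) / bdCard A ≤ M := by
  have hsum : ∑ᶠ i ∈ A, w i = (∑ᶠ i ∈ A ∪ H, w i) + -∑ᶠ i ∈ H, w i := by
    rw [finsum_mem_union hAH hA hHfin]
    ring
  rw [hsum, bdCard_eq_add hA hHfin hAH hH, Nat.cast_add]
  exact add_div_add_le (mod_cast bdCard_pos (hA.union hHfin) (hAne.mono Set.subset_union_left))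
    (mod_cast bdCard_pos hHfin hHne) h₁
    ((div_le_div_of_nonneg_right (neg_le_abs _) (Nat.cast_nonneg _)).trans h₂)

end Hole

def simplyConnRatios (w : ℤ × ℤ → ℝ) (N : ℕ) : Set ℝ :=
  {r | ∃ B : Set (ℤ × ℤ), B ⊆ latticeBox N ∧ simplyConn B ∧
    r = |∑ᶠ i ∈ B, w i| / (bdCard B : ℝ)}

theorem simplyConnRatios_finite (w : ℤ × ℤ → ℝ) (N : ℕ) : (simplyConnRatios w N).Finite :=
  ((latticeBox_finite N).finite_subsets.image fun B ↦ |∑ᶠ i ∈ B, w i| / (bdCard B : ℝ)).subset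
    fun _ ⟨B, hB, _, hr⟩ ↦ ⟨B, hB, hr.symm⟩

theorem le_sSup_simplyConnRatios (w : ℤ × ℤ → ℝ) {N : ℕ} {B : Set (ℤ × ℤ)}
    (hB : B ⊆ latticeBox N) (hsc : simplyConn B) :
    |∑ᶠ i ∈ B, w i| / (bdCard B : ℝ) ≤ sSup (simplyConnRatios w N) :=
  le_csSup (simplyConnRatios_finite w N).bddAbove ⟨B, hB, hsc, rfl⟩

theorem finsum_div_bdCard_le_sSup (w : ℤ × ℤ → ℝ) {N : ℕ} {A : Set (ℤ × ℤ)}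
    (hA : A ⊆ latticeBox N) (hne : A.Nonempty) (hconn : connSub A) :
    (∑ᶠ i ∈ A, w i) / (bdCard A : ℝ) ≤ sSup (simplyConnRatios w N) := by
  induction hk : (latticeBox N \ A).ncard using Nat.strong_induction_on generalizing A with
  | _ k ih =>
    have hAfin := (latticeBox_finite N).subset hA
    rcases connected_induce_compl_or_exists_componentCompl_subset hA
      (connSub_compl_latticeBox N) with hcompl | ⟨C, hC⟩
    · exact (div_le_div_of_nonneg_right (le_abs_self _) (Nat.cast_nonneg _)).trans
        (le_sSup_simplyConnRatios w hA ⟨hne, hAfin, hconn, hcompl⟩)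
    have hCfin := (latticeBox_finite N).subset hC
    obtain ⟨v, hv⟩ := C.nonempty
    have hlt : (latticeBox N \ (A ∪ C)).ncard < k := hk ▸ Set.ncard_lt_ncard
      ⟨Set.sdiff_subset_sdiff_right Set.subset_union_left,
        fun h ↦ (h ⟨hC hv, ComponentCompl.notMem_of_mem hv⟩).2 (Or.inr hv)⟩
      ((latticeBox_finite N).sdiff)
    exact finsum_div_bdCard_le_of_hole w hAfin hne hCfin C.nonempty C.disjoint_right
      (fun u hu v huv hv ↦ C.mem_of_adj u v hu hv huv)
      (ih _ hlt (Set.union_subset hA hC) (hne.mono Set.subset_union_left)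
        (C.connected_induce_union latticeGraph_preconnected hconn) rfl)
      (le_sSup_simplyConnRatios w hC ⟨C.nonempty, hCfin, C.connected_induce,
        C.connected_induce_compl latticeGraph_preconnected hconn⟩)

theorem reduction_to_simply_connected_animals_general (w : ℤ × ℤ → ℝ) (N : ℕ) :
    (∀ A : Set (ℤ × ℤ), A ⊆ latticeBox N → A.Nonempty → connSub A →
      (∑ᶠ i ∈ A, w i) / (bdCard A : ℝ) ≤
        sSup {r | ∃ B : Set (ℤ × ℤ), B ⊆ latticeBox N ∧ simplyConn B ∧
          r = |∑ᶠ i ∈ B, w i| / (bdCard B : ℝ)}) ∧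
    sSup {r | ∃ A : Set (ℤ × ℤ), A ⊆ latticeBox N ∧ (0, 0) ∈ A ∧ A.Nonempty ∧ connSub A ∧
        r = (∑ᶠ i ∈ A, w i) / (bdCard A : ℝ)} ≤
      sSup {r | ∃ B : Set (ℤ × ℤ), B ⊆ latticeBox N ∧ simplyConn B ∧
        r = |∑ᶠ i ∈ B, w i| / (bdCard B : ℝ)} := by
  have key := fun A (hA : A ⊆ latticeBox N) hne hconn ↦ finsum_div_bdCard_le_sSup w hA hne hconn
  refine ⟨key, csSup_le ⟨_, {(0, 0)}, by simp [latticeBox], rfl, Set.singleton_nonempty _,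
    connSub_singleton _, rfl⟩ ?_⟩
  rintro _ ⟨A, hA, -, hne, hconn, rfl⟩
  exact key A hA hne hconn

/-- Deterministic reduction lemma: for any site weights `w : ℤ² → ℝ` and any finite
nonempty connected `A ⊆ Λ_N`, the ratio `w(A)/|∂A|` is at most the maximum of
`|w(B)|/|∂B|` over nonempty simply connected `B ⊆ Λ_N`; consequently the maximum of
`w(A)/|∂A|` over nonempty connected subsets of `Λ_N` containing the origin is at most
that same simply connected maximum. -/
theorem reduction_to_simply_connected_animals (w : ℤ × ℤ → ℝ) (N : ℕ) (hN : 1 ≤ N) :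
    (∀ A : Set (ℤ × ℤ), A ⊆ latticeBox N → A.Nonempty → connSub A →
      (∑ᶠ i ∈ A, w i) / (bdCard A : ℝ) ≤
        sSup {r | ∃ B : Set (ℤ × ℤ), B ⊆ latticeBox N ∧ simplyConn B ∧
          r = |∑ᶠ i ∈ B, w i| / (bdCard B : ℝ)}) ∧
    sSup {r | ∃ A : Set (ℤ × ℤ), A ⊆ latticeBox N ∧ (0, 0) ∈ A ∧ A.Nonempty ∧ connSub A ∧
        r = (∑ᶠ i ∈ A, w i) / (bdCard A : ℝ)} ≤
      sSup {r | ∃ B : Set (ℤ × ℤ), B ⊆ latticeBox N ∧ simplyConn B ∧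
        r = |∑ᶠ i ∈ B, w i| / (bdCard B : ℝ)} :=
  reduction_to_simply_connected_animals_general w N
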